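/- arXiv:1404.1902 — 8 statements merged into one kernel-verified Lean document; each statement's English description precedes it below -/
import Mathlib

section
/- The function u(t,x) = 27 / (x³(ln x − 3t)³) satisfies the generalized Kompaneets equation u_t = x²u_{xx} + 4x(⅓x·u^{1/3} + 1)u_x + 4x·u^{4/3} on any open subset of ℝ₊ × ℝ₊ where ln x − 3t > 0. -/
/-!
Put `L = ln x − 3t`. Then `u = (3 / (x L))³`, so `u^{1/3} = 3 / (x L)` and `u^{4/3} = (3 / (x L))⁴`,
while `u_t = 243 / (x³ L⁴)`, `u_x = −81 (L + 1) / (x⁴ L⁴)` and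
`u_xx = 81 (4L² + 7L + 4) / (x⁵ L⁵)`. Substituting, the right-hand side equals
`81 (4L² + 7L + 4 − 4 (L + 1)² + 4L) / (x³ L⁵) = 243 / (x³ L⁴)`.
-/

open Real Filter

lemma pow_three_rpow_div_three {b : ℝ} (hb : 0 ≤ b) (p : ℝ) : (b ^ 3) ^ (p / 3) = b ^ p := by
  rw [← rpow_natCast_mul hb]
  norm_num [mul_div_cancel₀]

section SpaceDerivatives

variable {c y : ℝ}

lemma hasDerivAt_div_pow_mul_log_sub (hy : y ≠ 0) (hL : log y - c ≠ 0) :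
    HasDerivAt (fun y => 27 / (y ^ 3 * (log y - c) ^ 3))
      (-81 * (log y - c + 1) / (y ^ 4 * (log y - c) ^ 4)) y := by
  have hden := (hasDerivAt_pow 3 y).fun_mul (((hasDerivAt_log hy).sub_const c).fun_pow 3)
  refine ((hasDerivAt_const y (27 : ℝ)).fun_div hden (by simp [hy, hL])).congr_deriv ?_
  field_simp
  ring

lemma eventuallyEq_deriv_div_pow_mul_log_sub (hy : y ≠ 0) (hL : log y - c ≠ 0) :
    deriv (fun y => 27 / (y ^ 3 * (log y - c) ^ 3)) =ᶠ[nhds y]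
      fun y => -81 * (log y - c + 1) / (y ^ 4 * (log y - c) ^ 4) := by
  have hL' : ∀ᶠ z in nhds y, log z - c ≠ 0 :=
    ((continuousAt_log hy).sub continuousAt_const).eventually_ne hL
  filter_upwards [eventually_ne_nhds hy, hL'] with z hz hLz
  exact (hasDerivAt_div_pow_mul_log_sub hz hLz).deriv

lemma hasDerivAt_deriv_div_pow_mul_log_sub (hy : y ≠ 0) (hL : log y - c ≠ 0) :
    HasDerivAt (deriv fun y => 27 / (y ^ 3 * (log y - c) ^ 3))
      (81 * (4 * (log y - c) ^ 2 + 7 * (log y - c) + 4) / (y ^ 5 * (log y - c) ^ 5)) y := by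
  refine HasDerivAt.congr_of_eventuallyEq ?_ (eventuallyEq_deriv_div_pow_mul_log_sub hy hL)
  have hlog := (hasDerivAt_log hy).sub_const c
  have hden := (hasDerivAt_pow 4 y).fun_mul (hlog.fun_pow 4)
  refine (((hlog.add_const 1).const_mul (-81)).fun_div hden (by simp [hy, hL])).congr_deriv ?_
  field_simp
  ring

end SpaceDerivatives

lemma hasDerivAt_div_pow_mul_log_sub_time {x t : ℝ} (hx : x ≠ 0) (hL : log x - 3 * t ≠ 0) :
    HasDerivAt (fun s => 27 / (x ^ 3 * (log x - 3 * s) ^ 3))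
      (243 / (x ^ 3 * (log x - 3 * t) ^ 4)) t := by
  have hden := (((hasDerivAt_id' t).const_mul 3).const_sub (log x)).fun_pow 3 |>.const_mul (x ^ 3)
  refine ((hasDerivAt_const t (27 : ℝ)).fun_div hden (by simp [hx, hL])).congr_deriv ?_
  field_simp
  ring

theorem stmt_1_general (t x : ℝ) (hx : 0 < x) (h : 0 < Real.log x - 3 * t) :
    deriv (fun s : ℝ => 27 / (x ^ 3 * (Real.log x - 3 * s) ^ 3)) t =
      x ^ 2 * deriv (deriv (fun y : ℝ => 27 / (y ^ 3 * (Real.log y - 3 * t) ^ 3))) x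
      + 4 * x * ((1 / 3) * x * (27 / (x ^ 3 * (Real.log x - 3 * t) ^ 3)) ^ ((1 : ℝ) / 3) + 1)
          * deriv (fun y : ℝ => 27 / (y ^ 3 * (Real.log y - 3 * t) ^ 3)) x
      + 4 * x * (27 / (x ^ 3 * (Real.log x - 3 * t) ^ 3)) ^ ((4 : ℝ) / 3) := by
  rw [(hasDerivAt_div_pow_mul_log_sub_time hx.ne' h.ne').deriv,
    (hasDerivAt_deriv_div_pow_mul_log_sub hx.ne' h.ne').deriv,
    (hasDerivAt_div_pow_mul_log_sub hx.ne' h.ne').deriv]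
  set L := log x - 3 * t
  have hu : 27 / (x ^ 3 * L ^ 3) = (3 / (x * L)) ^ 3 := by
    field_simp
    ring
  have hw : 0 ≤ 3 / (x * L) := by positivity
  rw [hu, pow_three_rpow_div_three hw, pow_three_rpow_div_three hw, rpow_one, rpow_ofNat]
  field_simp
  ring

/-- `u(t,x) = 27/(x³(ln x − 3t)³)` satisfies the generalized Kompaneets
equation `u_t = x²u_{xx} + 4x(⅓x·u^{1/3} + 1)u_x + 4x·u^{4/3}` wherever
`t > 0`, `x > 0` and `ln x − 3t > 0`. -/
theorem stmt_1 (t x : ℝ) (ht : 0 < t) (hx : 0 < x) (h : 0 < Real.log x - 3 * t) :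
    deriv (fun s : ℝ => 27 / (x ^ 3 * (Real.log x - 3 * s) ^ 3)) t =
      x ^ 2 * deriv (deriv (fun y : ℝ => 27 / (y ^ 3 * (Real.log y - 3 * t) ^ 3))) x
      + 4 * x * ((1 / 3) * x * (27 / (x ^ 3 * (Real.log x - 3 * t) ^ 3)) ^ ((1 : ℝ) / 3) + 1)
          * deriv (fun y : ℝ => 27 / (y ^ 3 * (Real.log y - 3 * t) ^ 3)) x
      + 4 * x * (27 / (x ^ 3 * (Real.log x - 3 * t) ^ 3)) ^ ((4 : ℝ) / 3) :=
  stmt_1_general t x hx h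
end

section
/- For any real constant c, the function u(t,x) = 1 / (x³(1 − c·(x^{-1}e^{2t})^{1/3})³) satisfies the generalized Kompaneets equation u_t = x²u_{xx} + 4x(⅓x·u^{1/3} + 1)u_x + 4x·u^{4/3} on any open subset of ℝ₊ × ℝ₊ where 1 − c·(x^{-1}e^{2t})^{1/3} > 0. -/
/-!
Writing `u = w⁻³`, the Kompaneets equation for `u > 0` becomes the polynomial equation
`w w_t = x²(w w_xx − 4 w_x²) + (4/3) x² w_x + 4 x w w_x − (4/3) x w`, because `u^{1/3} = w⁻¹` and
`u^{4/3} = w⁻⁴`. For the given solution `w = x − c e^{2t/3} x^{2/3}`, and in terms of `X = x^{1/3}`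
all of `w`, `w_t`, `w_x`, `w_xx` are Laurent polynomials in `X`, so the reduced equation is an
identity of rational functions.
-/

open Real Filter Topology

section InvCube

variable {f f' : ℝ → ℝ} {x d d₂ : ℝ}

theorem hasDerivAt_inv_pow_three (hf : HasDerivAt f d x) (hx : f x ≠ 0) :
    HasDerivAt (fun y => (f y ^ 3)⁻¹) (-3 * d / f x ^ 4) x := by
  refine ((hf.fun_pow 3).fun_inv (pow_ne_zero 3 hx)).congr_deriv ?_
  field_simp
  push_cast
  ring

theorem deriv_deriv_inv_pow_three (hf : ∀ᶠ y in 𝓝 x, HasDerivAt f (f' y) y)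
    (hf' : HasDerivAt f' d₂ x) (hx : f x ≠ 0) :
    deriv (deriv fun y => (f y ^ 3)⁻¹) x = 12 * f' x ^ 2 / f x ^ 5 - 3 * d₂ / f x ^ 4 := by
  have hne : ∀ᶠ y in 𝓝 x, f y ≠ 0 := hf.self_of_nhds.continuousAt.eventually_ne hx
  have hderiv : deriv (fun y => (f y ^ 3)⁻¹) =ᶠ[𝓝 x] fun y => -3 * f' y / f y ^ 4 := by
    filter_upwards [hf, hne] with y hy hy₀ using (hasDerivAt_inv_pow_three hy hy₀).deriv
  rw [hderiv.deriv_eq,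
    ((hf'.const_mul (-3)).fun_div (hf.self_of_nhds.fun_pow 4) (pow_ne_zero 4 hx)).deriv]
  field_simp
  push_cast
  ring

end InvCube

theorem rpow_natCast_div_three {x : ℝ} (hx : 0 ≤ x) (n : ℕ) :
    x ^ ((n : ℝ) / 3) = (x ^ (1 / 3 : ℝ)) ^ n := by
  rw [← Real.rpow_natCast, ← Real.rpow_mul hx]
  ring_nf

theorem cbrt_substitution {x : ℝ} (hx : 0 < x) :
    ∃ X > 0, x = X ^ 3 ∧ x ^ (1 / 3 : ℝ) = X ∧ x ^ (2 / 3 : ℝ) = X ^ 2 ∧ x ^ (-1 / 3 : ℝ) = X⁻¹ ∧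
      x ^ (-4 / 3 : ℝ) = (X ^ 4)⁻¹ := by
  refine ⟨x ^ (1 / 3 : ℝ), by positivity, ?_, rfl, ?_, ?_, ?_⟩
  · rw [← rpow_natCast_div_three hx.le]; norm_num
  · rw [← rpow_natCast_div_three hx.le]; norm_num
  · rw [neg_div, Real.rpow_neg hx.le]
  · rw [neg_div, Real.rpow_neg hx.le, ← rpow_natCast_div_three hx.le]; norm_num

theorem kompaneets_inv_pow_three {x w wt wx wxx : ℝ} (hw : 0 < w)
    (h : w * wt = x ^ 2 * (w * wxx - 4 * wx ^ 2) + 4 / 3 * x ^ 2 * wx + 4 * x * w * wx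
      - 4 / 3 * x * w) :
    -3 * wt / w ^ 4 =
      x ^ 2 * (12 * wx ^ 2 / w ^ 5 - 3 * wxx / w ^ 4)
      + 4 * x * (1 / 3 * x * (w ^ 3)⁻¹ ^ (1 / 3 : ℝ) + 1) * (-3 * wx / w ^ 4)
      + 4 * x * (w ^ 3)⁻¹ ^ (4 / 3 : ℝ) := by
  have h₁ : (w ^ 3)⁻¹ ^ (1 / 3 : ℝ) = w⁻¹ := by
    rw [← inv_pow, one_div]
    exact_mod_cast Real.pow_rpow_inv_natCast (inv_pos.2 hw).le three_ne_zero
  have h₄ : (w ^ 3)⁻¹ ^ (4 / 3 : ℝ) = w⁻¹ ^ 4 := by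
    rw [← h₁, ← rpow_natCast_div_three (by positivity)]
    norm_num
  rw [h₁, h₄]
  field_simp
  linear_combination (-3) * h

namespace Kompaneets

variable (c t : ℝ)

noncomputable def u (x : ℝ) : ℝ :=
  1 / (x ^ 3 * (1 - c * (x⁻¹ * exp (2 * t)) ^ ((1 : ℝ) / 3)) ^ 3)

noncomputable def w (x : ℝ) : ℝ := x - c * exp (2 * t / 3) * x ^ (2 / 3 : ℝ)

noncomputable def wt (x : ℝ) : ℝ := -(2 / 3) * c * exp (2 * t / 3) * x ^ (2 / 3 : ℝ)

noncomputable def wx (x : ℝ) : ℝ := 1 - 2 / 3 * c * exp (2 * t / 3) * x ^ (-1 / 3 : ℝ)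

noncomputable def wxx (x : ℝ) : ℝ := 2 / 9 * c * exp (2 * t / 3) * x ^ (-4 / 3 : ℝ)

variable {c t} {x : ℝ}

theorem w_eq (hx : 0 < x) : w c t x = x * (1 - c * (x⁻¹ * exp (2 * t)) ^ (1 / 3 : ℝ)) := by
  have hexp : exp (2 * t) ^ (1 / 3 : ℝ) = exp (2 * t / 3) := by
    rw [← Real.exp_mul]; ring_nf
  rw [w, Real.mul_rpow (by positivity) (by positivity), Real.inv_rpow hx.le, hexp]
  obtain ⟨X, hX, rfl, h₁, h₂, -, -⟩ := cbrt_substitution hx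
  rw [h₁, h₂]
  field_simp

theorem u_eq (hx : 0 < x) : u c t x = (w c t x ^ 3)⁻¹ := by
  rw [u, w_eq hx, mul_pow, one_div]

theorem hasDerivAt_w_time : HasDerivAt (fun s => w c s x) (wt c t x) t := by
  refine ((hasDerivAt_const t x).sub (((((hasDerivAt_id' t).const_mul 2).div_const 3).exp.const_mul
    c).mul_const (x ^ (2 / 3 : ℝ)))).congr_deriv ?_
  rw [wt]
  ring

theorem hasDerivAt_w (hx : 0 < x) : HasDerivAt (w c t) (wx c t x) x := by
  refine ((hasDerivAt_id' x).sub ((Real.hasDerivAt_rpow_const (Or.inl hx.ne')).const_mul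
    (c * exp (2 * t / 3)))).congr_deriv ?_
  rw [wx]
  norm_num
  ring

theorem hasDerivAt_wx (hx : 0 < x) : HasDerivAt (wx c t) (wxx c t x) x := by
  refine (((Real.hasDerivAt_rpow_const (Or.inl hx.ne')).const_mul
    (2 / 3 * c * exp (2 * t / 3))).const_sub 1).congr_deriv ?_
  rw [wxx]
  norm_num
  ring

theorem reduced_equation (hx : 0 < x) :
    w c t x * wt c t x = x ^ 2 * (w c t x * wxx c t x - 4 * wx c t x ^ 2)
      + 4 / 3 * x ^ 2 * wx c t x + 4 * x * w c t x * wx c t x - 4 / 3 * x * w c t x := by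
  obtain ⟨X, hX, rfl, -, h₂, hm₁, hm₄⟩ := cbrt_substitution hx
  simp only [w, wt, wx, wxx, h₂, hm₁, hm₄]
  field_simp
  ring

end Kompaneets

open Kompaneets in
theorem stmt_2_general (c : ℝ) (t x : ℝ) (hx : 0 < x)
    (h : 0 < 1 - c * (x⁻¹ * Real.exp (2 * t)) ^ ((1 : ℝ) / 3)) :
    deriv (fun s : ℝ =>
        1 / (x ^ 3 * (1 - c * (x⁻¹ * Real.exp (2 * s)) ^ ((1 : ℝ) / 3)) ^ 3)) t =
      x ^ 2 * deriv (deriv (fun y : ℝ =>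
          1 / (y ^ 3 * (1 - c * (y⁻¹ * Real.exp (2 * t)) ^ ((1 : ℝ) / 3)) ^ 3))) x
      + 4 * x * ((1 / 3) * x
            * (1 / (x ^ 3 * (1 - c * (x⁻¹ * Real.exp (2 * t)) ^ ((1 : ℝ) / 3)) ^ 3))
              ^ ((1 : ℝ) / 3) + 1)
          * deriv (fun y : ℝ =>
              1 / (y ^ 3 * (1 - c * (y⁻¹ * Real.exp (2 * t)) ^ ((1 : ℝ) / 3)) ^ 3)) x
      + 4 * x * (1 / (x ^ 3 * (1 - c * (x⁻¹ * Real.exp (2 * t)) ^ ((1 : ℝ) / 3)) ^ 3))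
            ^ ((4 : ℝ) / 3) := by
  change deriv (fun s => u c s x) t = x ^ 2 * deriv (deriv (u c t)) x
    + 4 * x * (1 / 3 * x * u c t x ^ (1 / 3 : ℝ) + 1) * deriv (u c t) x
    + 4 * x * u c t x ^ (4 / 3 : ℝ)
  have hw : 0 < w c t x := by rw [w_eq hx]; exact mul_pos hx h
  have hu_near : u c t =ᶠ[𝓝 x] fun y => (w c t y ^ 3)⁻¹ := by
    filter_upwards [eventually_gt_nhds hx] with y hy using u_eq hy
  have hw_near : ∀ᶠ y in 𝓝 x, HasDerivAt (w c t) (wx c t y) y := by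
    filter_upwards [eventually_gt_nhds hx] with y hy using hasDerivAt_w hy
  have hut : deriv (fun s => u c s x) t = -3 * wt c t x / w c t x ^ 4 := by
    simp only [u_eq hx]
    exact (hasDerivAt_inv_pow_three hasDerivAt_w_time hw.ne').deriv
  have hux : deriv (u c t) x = -3 * wx c t x / w c t x ^ 4 := by
    rw [hu_near.deriv_eq]
    exact (hasDerivAt_inv_pow_three (hasDerivAt_w hx) hw.ne').deriv
  have huxx : deriv (deriv (u c t)) x =
      12 * wx c t x ^ 2 / w c t x ^ 5 - 3 * wxx c t x / w c t x ^ 4 := by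
    rw [hu_near.deriv.deriv_eq]
    exact deriv_deriv_inv_pow_three hw_near (hasDerivAt_wx hx) hw.ne'
  rw [hut, hux, huxx, u_eq hx]
  exact kompaneets_inv_pow_three hw (reduced_equation hx)

/-- for any `c`, the function
`u(t,x) = 1/(x³(1 − c·(x⁻¹e^{2t})^{1/3})³)` satisfies the generalized Kompaneets
equation `u_t = x²u_{xx} + 4x(⅓x·u^{1/3} + 1)u_x + 4x·u^{4/3}` wherever
`t > 0`, `x > 0` and `1 − c·(x⁻¹e^{2t})^{1/3} > 0`. -/
theorem stmt_2 (c : ℝ) (t x : ℝ) (ht : 0 < t) (hx : 0 < x)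
    (h : 0 < 1 - c * (x⁻¹ * Real.exp (2 * t)) ^ ((1 : ℝ) / 3)) :
    deriv (fun s : ℝ =>
        1 / (x ^ 3 * (1 - c * (x⁻¹ * Real.exp (2 * s)) ^ ((1 : ℝ) / 3)) ^ 3)) t =
      x ^ 2 * deriv (deriv (fun y : ℝ =>
          1 / (y ^ 3 * (1 - c * (y⁻¹ * Real.exp (2 * t)) ^ ((1 : ℝ) / 3)) ^ 3))) x
      + 4 * x * ((1 / 3) * x
            * (1 / (x ^ 3 * (1 - c * (x⁻¹ * Real.exp (2 * t)) ^ ((1 : ℝ) / 3)) ^ 3))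
              ^ ((1 : ℝ) / 3) + 1)
          * deriv (fun y : ℝ =>
              1 / (y ^ 3 * (1 - c * (y⁻¹ * Real.exp (2 * t)) ^ ((1 : ℝ) / 3)) ^ 3)) x
      + 4 * x * (1 / (x ^ 3 * (1 - c * (x⁻¹ * Real.exp (2 * t)) ^ ((1 : ℝ) / 3)) ^ 3))
            ^ ((4 : ℝ) / 3) :=
  stmt_2_general c t x hx h
end

section
/- For any real constant c, the function u(t,x) = 1 / (x³(c·(x e^{-4t})^{1/3} − 1)³) satisfies the generalized Kompaneets equation u_t = x²u_{xx} + 4x(⅓x·u^{1/3} + 1)u_x + 4x·u^{4/3} on any open subset of ℝ₊ × ℝ₊ where c·(x e^{-4t})^{1/3} − 1 > 0. -/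
/-!
Write `q = c (x e^{-4t})^{1/3}`, so that `u = (x (q - 1))^{-3}`. In space `q` scales like
`x^{1/3}` and in time like `e^{-4t/3}`, i.e. `∂ₓq = q / (3x)` and `∂ₜq = -4q/3`. Hence `u_t`, `u_x`
and `u_xx` are rational in `x` and `q`, and the equation becomes a polynomial identity in `q`
once the common factor `4 / (3 x³ (q - 1)⁵)` is cleared.
-/

open Real Filter Topology

theorem one_div_pow_three_rpow {a : ℝ} (ha : 0 ≤ a) (p : ℝ) :
    (1 / a ^ 3) ^ p = (1 / a) ^ (3 * p) := by
  rw [← one_div_pow, Real.rpow_mul (by positivity)]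
  norm_cast

theorem hasDerivAt_mul_const_rpow {b z : ℝ} (p : ℝ) (hb : 0 < b) (hz : 0 < z) :
    HasDerivAt (fun y => (y * b) ^ p) (p * (z * b) ^ p / z) z := by
  have hzb : z * b ≠ 0 := by positivity
  convert ((hasDerivAt_id' z).mul_const b).rpow_const (p := p) (Or.inl hzb) using 1
  rw [Real.rpow_sub_one hzb]
  field_simp

theorem hasDerivAt_mul_exp_rpow {x : ℝ} (k p t : ℝ) (hx : 0 < x) :
    HasDerivAt (fun s => (x * exp (k * s)) ^ p) (k * p * (x * exp (k * t)) ^ p) t := by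
  have hxe : x * exp (k * t) ≠ 0 := by positivity
  convert ((((hasDerivAt_id' t).const_mul k).exp).const_mul x).rpow_const (p := p) (Or.inl hxe)
    using 1
  rw [Real.rpow_sub_one hxe]
  field_simp

section Profile

variable {Q : ℝ → ℝ} {y : ℝ}

theorem hasDerivAt_profile (hQ : HasDerivAt Q (Q y / (3 * y)) y) (hy : y ≠ 0)
    (hg : Q y - 1 ≠ 0) :
    HasDerivAt (fun z => 1 / (z ^ 3 * (Q z - 1) ^ 3))
      (-(4 * Q y - 3) / (y ^ 4 * (Q y - 1) ^ 4)) y := by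
  refine ((hasDerivAt_const y (1 : ℝ)).fun_div
    ((hasDerivAt_pow 3 y).fun_mul ((hQ.sub_const 1).fun_pow 3))
    (mul_ne_zero (pow_ne_zero 3 hy) (pow_ne_zero 3 hg))).congr_deriv ?_
  field_simp
  ring

theorem hasDerivAt_profile_deriv (hQ : HasDerivAt Q (Q y / (3 * y)) y) (hy : y ≠ 0)
    (hg : Q y - 1 ≠ 0) :
    HasDerivAt (fun z => -(4 * Q z - 3) / (z ^ 4 * (Q z - 1) ^ 4))
      (4 * (15 * Q y ^ 2 - 23 * Q y + 9) / (3 * y ^ 5 * (Q y - 1) ^ 5)) y := by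
  refine (((hQ.const_mul 4).sub_const 3).fun_neg.fun_div
    ((hasDerivAt_pow 4 y).fun_mul ((hQ.sub_const 1).fun_pow 4))
    (mul_ne_zero (pow_ne_zero 4 hy) (pow_ne_zero 4 hg))).congr_deriv ?_
  field_simp
  ring

theorem deriv_deriv_profile (hQ : ∀ᶠ z in 𝓝 y, HasDerivAt Q (Q z / (3 * z)) z) (hy : y ≠ 0)
    (hg : Q y - 1 ≠ 0) :
    deriv (deriv fun z => 1 / (z ^ 3 * (Q z - 1) ^ 3)) y =
      4 * (15 * Q y ^ 2 - 23 * Q y + 9) / (3 * y ^ 5 * (Q y - 1) ^ 5) := by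
  have hQ_cont : ContinuousAt (fun z => Q z - 1) y :=
    hQ.self_of_nhds.continuousAt.sub continuousAt_const
  have hderiv : deriv (fun z => 1 / (z ^ 3 * (Q z - 1) ^ 3)) =ᶠ[𝓝 y]
      fun z => -(4 * Q z - 3) / (z ^ 4 * (Q z - 1) ^ 4) := by
    filter_upwards [hQ, eventually_ne_nhds hy, hQ_cont.eventually_ne hg] with z hQz hz hgz
    exact (hasDerivAt_profile hQz hz hgz).deriv
  rw [hderiv.deriv_eq]
  exact (hasDerivAt_profile_deriv hQ.self_of_nhds hy hg).deriv

end Profile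

theorem hasDerivAt_profile_time {R : ℝ → ℝ} {x t : ℝ} (hR : HasDerivAt R (-(4 / 3) * R t) t)
    (hx : x ≠ 0) (hg : R t - 1 ≠ 0) :
    HasDerivAt (fun s => 1 / (x ^ 3 * (R s - 1) ^ 3)) (4 * R t / (x ^ 3 * (R t - 1) ^ 4)) t := by
  refine ((hasDerivAt_const t (1 : ℝ)).fun_div (((hR.sub_const 1).fun_pow 3).const_mul (x ^ 3))
    (mul_ne_zero (pow_ne_zero 3 hx) (pow_ne_zero 3 hg))).congr_deriv ?_
  norm_num
  field_simp

theorem kompaneets_rhs_eq {x q : ℝ} (hx : 0 < x) (hq : 0 < q - 1) :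
    4 * q / (x ^ 3 * (q - 1) ^ 4) =
      x ^ 2 * (4 * (15 * q ^ 2 - 23 * q + 9) / (3 * x ^ 5 * (q - 1) ^ 5))
      + 4 * x * ((1 / 3) * x * (1 / (x ^ 3 * (q - 1) ^ 3)) ^ ((1 : ℝ) / 3) + 1)
          * (-(4 * q - 3) / (x ^ 4 * (q - 1) ^ 4))
      + 4 * x * (1 / (x ^ 3 * (q - 1) ^ 3)) ^ ((4 : ℝ) / 3) := by
  have hxq : 0 < x * (q - 1) := mul_pos hx hq
  rw [← mul_pow, one_div_pow_three_rpow hxq.le, one_div_pow_three_rpow hxq.le]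
  norm_num
  field_simp
  ring

theorem stmt_3_general (c : ℝ) (t x : ℝ) (hx : 0 < x)
    (h : 0 < c * (x * Real.exp (-4 * t)) ^ ((1 : ℝ) / 3) - 1) :
    deriv (fun s : ℝ =>
        1 / (x ^ 3 * (c * (x * Real.exp (-4 * s)) ^ ((1 : ℝ) / 3) - 1) ^ 3)) t =
      x ^ 2 * deriv (deriv (fun y : ℝ =>
          1 / (y ^ 3 * (c * (y * Real.exp (-4 * t)) ^ ((1 : ℝ) / 3) - 1) ^ 3))) x
      + 4 * x * ((1 / 3) * x
            * (1 / (x ^ 3 * (c * (x * Real.exp (-4 * t)) ^ ((1 : ℝ) / 3) - 1) ^ 3))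
              ^ ((1 : ℝ) / 3) + 1)
          * deriv (fun y : ℝ =>
              1 / (y ^ 3 * (c * (y * Real.exp (-4 * t)) ^ ((1 : ℝ) / 3) - 1) ^ 3)) x
      + 4 * x * (1 / (x ^ 3 * (c * (x * Real.exp (-4 * t)) ^ ((1 : ℝ) / 3) - 1) ^ 3))
            ^ ((4 : ℝ) / 3) := by
  have hR : HasDerivAt (fun s => c * (x * exp (-4 * s)) ^ ((1 : ℝ) / 3))
      (-(4 / 3) * (c * (x * exp (-4 * t)) ^ ((1 : ℝ) / 3))) t :=
    ((hasDerivAt_mul_exp_rpow (-4) _ t hx).const_mul c).congr_deriv (by ring)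
  have hQ : ∀ᶠ z in 𝓝 x, HasDerivAt (fun y => c * (y * exp (-4 * t)) ^ ((1 : ℝ) / 3))
      (c * (z * exp (-4 * t)) ^ ((1 : ℝ) / 3) / (3 * z)) z := by
    filter_upwards [eventually_gt_nhds hx] with z hz
    exact ((hasDerivAt_mul_const_rpow _ (exp_pos _) hz).const_mul c).congr_deriv (by ring)
  rw [(hasDerivAt_profile_time hR hx.ne' h.ne').deriv, deriv_deriv_profile hQ hx.ne' h.ne',
    (hasDerivAt_profile hQ.self_of_nhds hx.ne' h.ne').deriv]
  exact kompaneets_rhs_eq hx h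

/-- for any `c`, the function
`u(t,x) = 1/(x³(c·(x e^{−4t})^{1/3} − 1)³)` satisfies the generalized Kompaneets
equation `u_t = x²u_{xx} + 4x(⅓x·u^{1/3} + 1)u_x + 4x·u^{4/3}` wherever
`t > 0`, `x > 0` and `c·(x e^{−4t})^{1/3} − 1 > 0`. -/
theorem stmt_3 (c : ℝ) (t x : ℝ) (ht : 0 < t) (hx : 0 < x)
    (h : 0 < c * (x * Real.exp (-4 * t)) ^ ((1 : ℝ) / 3) - 1) :
    deriv (fun s : ℝ =>
        1 / (x ^ 3 * (c * (x * Real.exp (-4 * s)) ^ ((1 : ℝ) / 3) - 1) ^ 3)) t =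
      x ^ 2 * deriv (deriv (fun y : ℝ =>
          1 / (y ^ 3 * (c * (y * Real.exp (-4 * t)) ^ ((1 : ℝ) / 3) - 1) ^ 3))) x
      + 4 * x * ((1 / 3) * x
            * (1 / (x ^ 3 * (c * (x * Real.exp (-4 * t)) ^ ((1 : ℝ) / 3) - 1) ^ 3))
              ^ ((1 : ℝ) / 3) + 1)
          * deriv (fun y : ℝ =>
              1 / (y ^ 3 * (c * (y * Real.exp (-4 * t)) ^ ((1 : ℝ) / 3) - 1) ^ 3)) x
      + 4 * x * (1 / (x ^ 3 * (c * (x * Real.exp (-4 * t)) ^ ((1 : ℝ) / 3) - 1) ^ 3))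
            ^ ((4 : ℝ) / 3) :=
  stmt_3_general c t x hx h
end

section
/- The vector field X₂ = x∂_x − 3u∂_u is an infinitesimal symmetry of the equation u_t = x²u_{xx} + 4x(⅓x·u^{1/3} + 1)u_x + 4x·u^{4/3} in the following concrete sense: if u(t,x) > 0 solves the equation on an open subset of ℝ₊ × ℝ₊, then for every ε ∈ ℝ the function u_ε(t,x) = e^{-3ε}·u(t, e^{-ε}x) also solves the equation (on the appropriately transformed domain). -/
/-!
Both sides of the equation are homogeneous under `x ↦ c x`, `u ↦ c³ u`: the time derivative and
every term of the right-hand side pick up the same factor `c³` (the powers `u^{1/3}`, `u^{4/3}`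
are where `u` must be nonnegative). Since `deriv (f (c * ·)) x = c • deriv f (c * x)` holds for
every `f`, junk values included, the scaling of the derivatives is purely formal.
-/

open Real

section ScaledDeriv

variable {𝕜 : Type*} [NontriviallyNormedField 𝕜]

theorem deriv_const_mul_comp_mul_left (a c : 𝕜) (f : 𝕜 → 𝕜) (x : 𝕜) :
    deriv (fun y => a * f (c * y)) x = a * c * deriv f (c * x) := by
  rw [deriv_const_mul_field, deriv_comp_mul_left, smul_eq_mul, mul_assoc]

theorem deriv_deriv_const_mul_comp_mul_left (a c : 𝕜) (f : 𝕜 → 𝕜) (x : 𝕜) :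
    deriv (deriv fun y => a * f (c * y)) x = a * c ^ 2 * deriv (deriv f) (c * x) := by
  rw [funext (deriv_const_mul_comp_mul_left a c f), deriv_const_mul_comp_mul_left]
  ring

end ScaledDeriv

theorem Real.pow_three_mul_rpow {c v : ℝ} (hc : 0 ≤ c) (hv : 0 ≤ v) (z : ℝ) :
    (c ^ 3 * v) ^ z = c ^ (3 * z) * v ^ z := by
  rw [mul_rpow (by positivity) hv, ← rpow_natCast_mul hc]
  norm_num

noncomputable def kompaneetsRHS (u : ℝ → ℝ → ℝ) (t x : ℝ) : ℝ :=
  x ^ 2 * deriv (deriv (fun y => u t y)) x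
    + 4 * x * ((1 / 3) * x * (u t x) ^ ((1 : ℝ) / 3) + 1) * deriv (fun y => u t y) x
    + 4 * x * (u t x) ^ ((4 : ℝ) / 3)

/-- The flow of `X₂ = x∂_x − 3u∂_u` at time `ε`, written with `c = e^{-ε}`. -/
def scaleX₂ (c : ℝ) (u : ℝ → ℝ → ℝ) (t x : ℝ) : ℝ :=
  c ^ 3 * u t (c * x)

theorem kompaneetsRHS_scaleX₂ {c : ℝ} (hc : 0 ≤ c) (u : ℝ → ℝ → ℝ) {t x : ℝ}
    (hu : 0 ≤ u t (c * x)) :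
    kompaneetsRHS (scaleX₂ c u) t x = c ^ 3 * kompaneetsRHS u t (c * x) := by
  have h13 : (c ^ 3 * u t (c * x)) ^ ((1 : ℝ) / 3) = c * u t (c * x) ^ ((1 : ℝ) / 3) := by
    rw [pow_three_mul_rpow hc hu]; norm_num
  have h43 : (c ^ 3 * u t (c * x)) ^ ((4 : ℝ) / 3) = c ^ 4 * u t (c * x) ^ ((4 : ℝ) / 3) := by
    rw [pow_three_mul_rpow hc hu]; norm_num
  simp only [kompaneetsRHS, scaleX₂, deriv_const_mul_comp_mul_left,
    deriv_deriv_const_mul_comp_mul_left, h13, h43]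
  ring

theorem stmt_13_general (S : Set (ℝ × ℝ))
    (u : ℝ → ℝ → ℝ)
    (hpos : ∀ t x : ℝ, (t, x) ∈ S → 0 < u t x)
    (hpde : ∀ t x : ℝ, (t, x) ∈ S →
      deriv (fun s => u s x) t =
        x ^ 2 * deriv (deriv (fun y => u t y)) x
        + 4 * x * ((1 / 3) * x * (u t x) ^ ((1 : ℝ) / 3) + 1) * deriv (fun y => u t y) x
        + 4 * x * (u t x) ^ ((4 : ℝ) / 3)) :
    ∀ ε t x : ℝ, (t, Real.exp (-ε) * x) ∈ S →
      deriv (fun s => Real.exp (-3 * ε) * u s (Real.exp (-ε) * x)) t =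
        x ^ 2 * deriv (deriv (fun y => Real.exp (-3 * ε) * u t (Real.exp (-ε) * y))) x
        + 4 * x * ((1 / 3) * x
              * (Real.exp (-3 * ε) * u t (Real.exp (-ε) * x)) ^ ((1 : ℝ) / 3) + 1)
            * deriv (fun y => Real.exp (-3 * ε) * u t (Real.exp (-ε) * y)) x
        + 4 * x * (Real.exp (-3 * ε) * u t (Real.exp (-ε) * x)) ^ ((4 : ℝ) / 3) := by
  intro ε t x hmem
  have hexp : exp (-3 * ε) = exp (-ε) ^ 3 := by rw [← exp_nat_mul]; ring_nf
  rw [hexp]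
  change deriv (fun s => scaleX₂ (exp (-ε)) u s x) t = kompaneetsRHS (scaleX₂ (exp (-ε)) u) t x
  have hsol : deriv (fun s => u s (exp (-ε) * x)) t = kompaneetsRHS u t (exp (-ε) * x) :=
    hpde _ _ hmem
  rw [kompaneetsRHS_scaleX₂ (exp_pos _).le u (hpos _ _ hmem).le, ← hsol]
  exact deriv_const_mul_field _

/-- the scaling group generated by `X₂ = x∂_x − 3u∂_u` is a symmetry
group of `u_t = x²u_{xx} + 4x(⅓x·u^{1/3} + 1)u_x + 4x·u^{4/3}`: if `u > 0` solves the
equation on an open subset `S` of `ℝ₊ × ℝ₊`, then for every `ε ∈ ℝ` the function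
`u_ε(t,x) = e^{−3ε}·u(t, e^{−ε}x)` also solves it on the transformed domain. -/
theorem stmt_13 (S : Set (ℝ × ℝ)) (hS : IsOpen S)
    (hSsub : S ⊆ Set.Ioi (0 : ℝ) ×ˢ Set.Ioi (0 : ℝ))
    (u : ℝ → ℝ → ℝ) (hreg : ContDiffOn ℝ 2 (Function.uncurry u) S)
    (hpos : ∀ t x : ℝ, (t, x) ∈ S → 0 < u t x)
    (hpde : ∀ t x : ℝ, (t, x) ∈ S →
      deriv (fun s => u s x) t =
        x ^ 2 * deriv (deriv (fun y => u t y)) x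
        + 4 * x * ((1 / 3) * x * (u t x) ^ ((1 : ℝ) / 3) + 1) * deriv (fun y => u t y) x
        + 4 * x * (u t x) ^ ((4 : ℝ) / 3)) :
    ∀ ε t x : ℝ, (t, Real.exp (-ε) * x) ∈ S →
      deriv (fun s => Real.exp (-3 * ε) * u s (Real.exp (-ε) * x)) t =
        x ^ 2 * deriv (deriv (fun y => Real.exp (-3 * ε) * u t (Real.exp (-ε) * y))) x
        + 4 * x * ((1 / 3) * x
              * (Real.exp (-3 * ε) * u t (Real.exp (-ε) * x)) ^ ((1 : ℝ) / 3) + 1)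
            * deriv (fun y => Real.exp (-3 * ε) * u t (Real.exp (-ε) * y)) x
        + 4 * x * (Real.exp (-3 * ε) * u t (Real.exp (-ε) * x)) ^ ((4 : ℝ) / 3) :=
  stmt_13_general S u hpos hpde
end

section
/- Suppose u(t,x) is a positive solution of u_t = x²u_{xx} + 4x(⅓x·u^{1/3} + 1)u_x + 4x·u^{4/3} on ℝ₊ × ℝ₊ of the form u(t,x) = x^{-3}·φ(x e^{-2t}) for a twice differentiable positive function φ : ℝ₊ → ℝ₊. Then φ satisfies the generalized Emden–Fowler equation φ''(y) + (4/(3y))·φ(y)^{1/3}·φ'(y) = 0 for all y in the relevant domain. -/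
/-!
Take `t = 1` and `x = y e²`, so that `x e^{-2t} = y`. By the chain rule, `u_t`, `u_x` and `u_xx`
of `u = x⁻³ φ(x e^{-2t})` are combinations of `φ`, `φ'`, `φ''` at `y`, and
`u^{1/3} = φ^{1/3}/x`, `u^{4/3} = φ·φ^{1/3}/x⁴`. Substituted into the equation, all terms
containing `φ` itself cancel, leaving `e^{-2} x (3yφ'' + 4φ^{1/3}φ') = 0`.
-/

open Filter Topology

section Ansatz

variable {φ : ℝ → ℝ}

theorem hasDerivAt_ansatz_time {x t : ℝ} (hx : x ≠ 0)
    (hφ : DifferentiableAt ℝ φ (x * Real.exp (-2 * t))) :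
    HasDerivAt (fun s => φ (x * Real.exp (-2 * s)) / x ^ 3)
      (-2 * Real.exp (-2 * t) * deriv φ (x * Real.exp (-2 * t)) / x ^ 2) t := by
  have hinner : HasDerivAt (fun s => x * Real.exp (-2 * s)) (x * (Real.exp (-2 * t) * -2)) t :=
    (((hasDerivAt_id t).const_mul (-2)).exp.congr_deriv (by simp)).const_mul x
  refine ((hφ.hasDerivAt.comp t hinner).div_const (x ^ 3)).congr_deriv ?_
  field_simp

theorem hasDerivAt_ansatz_space {c z : ℝ} (hz : z ≠ 0) (hφ : DifferentiableAt ℝ φ (z * c)) :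
    HasDerivAt (fun y => φ (y * c) / y ^ 3)
      (c * deriv φ (z * c) / z ^ 3 - 3 * φ (z * c) / z ^ 4) z := by
  refine ((hφ.hasDerivAt.comp z (hasDerivAt_mul_const c)).div (hasDerivAt_pow 3 z)
    (pow_ne_zero 3 hz)).congr_deriv ?_
  simp only [Function.comp_apply]
  field_simp
  ring

theorem deriv_ansatz_space_eventuallyEq {c x : ℝ} (hc : 0 < c) (hx : 0 < x)
    (hφ : ∀ y, 0 < y → DifferentiableAt ℝ φ y) :
    deriv (fun y => φ (y * c) / y ^ 3) =ᶠ[𝓝 x]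
      fun z => c * deriv φ (z * c) / z ^ 3 - 3 * φ (z * c) / z ^ 4 := by
  filter_upwards [Ioi_mem_nhds hx] with z hz
  exact (hasDerivAt_ansatz_space (ne_of_gt hz) (hφ _ (mul_pos hz hc))).deriv

theorem hasDerivAt_deriv_ansatz_space {c x : ℝ} (hx : x ≠ 0)
    (hφ : DifferentiableAt ℝ φ (x * c)) (hφ' : DifferentiableAt ℝ (deriv φ) (x * c)) :
    HasDerivAt (fun z => c * deriv φ (z * c) / z ^ 3 - 3 * φ (z * c) / z ^ 4)
      (c ^ 2 * deriv (deriv φ) (x * c) / x ^ 3 - 6 * c * deriv φ (x * c) / x ^ 4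
        + 12 * φ (x * c) / x ^ 5) x := by
  have h₁ := ((hφ'.hasDerivAt.comp x (hasDerivAt_mul_const c)).const_mul c).div
    (hasDerivAt_pow 3 x) (pow_ne_zero 3 hx)
  have h₂ := ((hφ.hasDerivAt.comp x (hasDerivAt_mul_const c)).const_mul 3).div
    (hasDerivAt_pow 4 x) (pow_ne_zero 4 hx)
  refine (h₁.sub h₂).congr_deriv ?_
  simp only [Function.comp_apply]
  field_simp
  ring

end Ansatz

theorem rpow_one_third_div_pow_three {a x : ℝ} (ha : 0 ≤ a) (hx : 0 ≤ x) :
    (a / x ^ 3) ^ ((1 : ℝ) / 3) = a ^ ((1 : ℝ) / 3) / x := by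
  rw [Real.div_rpow ha (by positivity), show (1 : ℝ) / 3 = ((3 : ℕ) : ℝ)⁻¹ by norm_num,
    Real.pow_rpow_inv_natCast hx three_ne_zero]

theorem rpow_four_thirds_div_pow_three {a x : ℝ} (ha : 0 ≤ a) (hx : 0 ≤ x) :
    (a / x ^ 3) ^ ((4 : ℝ) / 3) = a * a ^ ((1 : ℝ) / 3) / x ^ 4 := by
  rw [show (4 : ℝ) / 3 = 1 / 3 + 1 by norm_num, Real.rpow_add_one' (by positivity) (by norm_num),
    rpow_one_third_div_pow_three ha hx]
  ring

theorem emdenFowler_of_reduced_pde {c x a a' a'' r : ℝ} (hc : c ≠ 0) (hx : x ≠ 0)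
    (h : -2 * c * a' / x ^ 2 =
      x ^ 2 * (c ^ 2 * a'' / x ^ 3 - 6 * c * a' / x ^ 4 + 12 * a / x ^ 5)
        + 4 * x * (1 / 3 * x * (r / x) + 1) * (c * a' / x ^ 3 - 3 * a / x ^ 4)
        + 4 * x * (a * r / x ^ 4)) :
    a'' + 4 / (3 * (x * c)) * r * a' = 0 := by
  have hreduced : c * x * (3 * (x * c) * a'' + 4 * r * a') = 0 := by
    field_simp at h
    linear_combination -h
  have hode := (mul_eq_zero.mp hreduced).resolve_left (mul_ne_zero hc hx)
  field_simp
  linear_combination hode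

/-- if `u(t,x) = x⁻³·φ(x e^{−2t})` is a positive solution of
`u_t = x²u_{xx} + 4x(⅓x·u^{1/3} + 1)u_x + 4x·u^{4/3}` on `ℝ₊ × ℝ₊`, with `φ` twice
differentiable and positive on `(0, ∞)`, then `φ` satisfies the generalized
Emden–Fowler equation `φ'' + (4/(3y))·φ^{1/3}·φ' = 0` on `(0, ∞)`. -/
theorem stmt_15 (φ : ℝ → ℝ)
    (hφ : ∀ y : ℝ, 0 < y → DifferentiableAt ℝ φ y ∧ DifferentiableAt ℝ (deriv φ) y)
    (hφpos : ∀ y : ℝ, 0 < y → 0 < φ y)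
    (hpde : ∀ t x : ℝ, 0 < t → 0 < x →
      deriv (fun s => φ (x * Real.exp (-2 * s)) / x ^ 3) t =
        x ^ 2 * deriv (deriv (fun y => φ (y * Real.exp (-2 * t)) / y ^ 3)) x
        + 4 * x * ((1 / 3) * x
              * (φ (x * Real.exp (-2 * t)) / x ^ 3) ^ ((1 : ℝ) / 3) + 1)
            * deriv (fun y => φ (y * Real.exp (-2 * t)) / y ^ 3) x
        + 4 * x * (φ (x * Real.exp (-2 * t)) / x ^ 3) ^ ((4 : ℝ) / 3)) :
    ∀ y : ℝ, 0 < y →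
      deriv (deriv φ) y + (4 / (3 * y)) * (φ y) ^ ((1 : ℝ) / 3) * deriv φ y = 0 := by
  intro y hy
  have hc : 0 < Real.exp (-2 * 1) := Real.exp_pos _
  obtain ⟨x, hx, rfl⟩ : ∃ x, 0 < x ∧ x * Real.exp (-2 * 1) = y :=
    ⟨y / _, div_pos hy hc, div_mul_cancel₀ y hc.ne'⟩
  obtain ⟨hφ₀, hφ₁⟩ := hφ _ hy
  have h := hpde 1 x one_pos hx
  rw [(hasDerivAt_ansatz_time hx.ne' hφ₀).deriv,
    (deriv_ansatz_space_eventuallyEq hc hx fun z hz => (hφ z hz).1).deriv_eq,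
    (hasDerivAt_deriv_ansatz_space hx.ne' hφ₀ hφ₁).deriv,
    (hasDerivAt_ansatz_space hx.ne' hφ₀).deriv,
    rpow_one_third_div_pow_three (hφpos _ hy).le hx.le,
    rpow_four_thirds_div_pow_three (hφpos _ hy).le hx.le] at h
  exact emdenFowler_of_reduced_pde hc.ne' hx.ne' h
end

section
/- Suppose u(t,x) is a positive solution of u_t = x²u_{xx} + 4x(⅓x·u^{1/3} + 1)u_x + 4x·u^{4/3} on ℝ₊ × ℝ₊ of the form u(t,x) = x^{-3}·φ(x e^{-4t}) for a twice differentiable positive φ. Then φ satisfies φ''(y) + (2/y)((2/3)φ(y)^{1/3} + 1)φ'(y) = 0. -/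
/-!
With `u = x⁻³ φ(x c)` and `c = e^{-4t}`, the chain and quotient rules express `u_t`, `u_x`, `u_xx`
through `φ`, `φ'`, `φ''` at `y = x c`, and `u^{1/3} = φ^{1/3} / x`. Substituting at `t = 1`, the
terms in `φ` alone cancel and the residual of the PDE is `-x⁻³ (y² φ'' + 2y((2/3)φ^{1/3} + 1)φ')`.
-/

open Real Filter Topology

section ScaledQuotient

variable {f : ℝ → ℝ} {c w : ℝ}

theorem hasDerivAt_comp_mul_div_pow (n : ℕ) (hw : w ≠ 0) (hf : DifferentiableAt ℝ f (w * c)) :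
    HasDerivAt (fun z => f (z * c) / z ^ n)
      (c * deriv f (w * c) / w ^ n - n * f (w * c) / w ^ (n + 1)) w := by
  have hfc : HasDerivAt (fun z => f (z * c)) (deriv f (w * c) * c) w :=
    hf.hasDerivAt.comp w ((hasDerivAt_mul_const c).congr_deriv rfl)
  refine (hfc.div (hasDerivAt_pow n w) (pow_ne_zero n hw)).congr_deriv ?_
  rcases n with _ | n
  · simp [mul_comm]
  · rw [Nat.add_sub_cancel]
    field_simp
    ring

theorem deriv_deriv_comp_mul_div_pow (n : ℕ) (hw : w ≠ 0)
    (hf : ∀ᶠ z in 𝓝 w, DifferentiableAt ℝ f (z * c))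
    (hf' : DifferentiableAt ℝ (deriv f) (w * c)) :
    deriv (deriv fun z => f (z * c) / z ^ n) w =
      c ^ 2 * deriv (deriv f) (w * c) / w ^ n - 2 * n * c * deriv f (w * c) / w ^ (n + 1)
        + n * (n + 1) * f (w * c) / w ^ (n + 2) := by
  have hderiv : deriv (fun z => f (z * c) / z ^ n) =ᶠ[𝓝 w]
      fun z => c * (deriv f (z * c) / z ^ n) - n * (f (z * c) / z ^ (n + 1)) := by
    filter_upwards [hf, eventually_ne_nhds hw] with z hfz hz
    rw [(hasDerivAt_comp_mul_div_pow n hz hfz).deriv]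
    ring
  rw [hderiv.deriv_eq]
  have h₁ := (hasDerivAt_comp_mul_div_pow n hw hf').const_mul c
  have h₂ := (hasDerivAt_comp_mul_div_pow (n + 1) hw hf.self_of_nhds).const_mul (n : ℝ)
  exact ((h₁.sub h₂).congr_deriv (by push_cast; ring)).deriv

end ScaledQuotient

theorem hasDerivAt_comp_mul_exp {f : ℝ → ℝ} (x a t : ℝ)
    (hf : DifferentiableAt ℝ f (x * exp (a * t))) :
    HasDerivAt (fun s => f (x * exp (a * s)))
      (a * (x * exp (a * t)) * deriv f (x * exp (a * t))) t := by
  have h := ((hasDerivAt_id' t).const_mul a).exp.const_mul x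
  exact (hf.hasDerivAt.comp t h).congr_deriv (by ring)

theorem div_pow_rpow_div {a x : ℝ} (ha : 0 ≤ a) (hx : 0 ≤ x) (k : ℕ) {n : ℕ} (hn : n ≠ 0) :
    (a / x ^ n) ^ ((k : ℝ) / n) = a ^ ((k : ℝ) / n) / x ^ k := by
  rw [div_rpow ha (by positivity), ← rpow_natCast x n, ← rpow_mul hx,
    mul_div_cancel₀ _ (by exact_mod_cast hn), rpow_natCast]

/-- if `u(t,x) = x⁻³·φ(x e^{−4t})` is a positive solution of
`u_t = x²u_{xx} + 4x(⅓x·u^{1/3} + 1)u_x + 4x·u^{4/3}` on `ℝ₊ × ℝ₊`, with `φ` twice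
differentiable and positive on `(0, ∞)`, then `φ` satisfies
`φ'' + (2/y)((2/3)φ^{1/3} + 1)φ' = 0` on `(0, ∞)`. -/
theorem stmt_16 (φ : ℝ → ℝ)
    (hφ : ∀ y : ℝ, 0 < y → DifferentiableAt ℝ φ y ∧ DifferentiableAt ℝ (deriv φ) y)
    (hφpos : ∀ y : ℝ, 0 < y → 0 < φ y)
    (hpde : ∀ t x : ℝ, 0 < t → 0 < x →
      deriv (fun s => φ (x * Real.exp (-4 * s)) / x ^ 3) t =
        x ^ 2 * deriv (deriv (fun y => φ (y * Real.exp (-4 * t)) / y ^ 3)) x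
        + 4 * x * ((1 / 3) * x
              * (φ (x * Real.exp (-4 * t)) / x ^ 3) ^ ((1 : ℝ) / 3) + 1)
            * deriv (fun y => φ (y * Real.exp (-4 * t)) / y ^ 3) x
        + 4 * x * (φ (x * Real.exp (-4 * t)) / x ^ 3) ^ ((4 : ℝ) / 3)) :
    ∀ y : ℝ, 0 < y →
      deriv (deriv φ) y
        + (2 / y) * ((2 / 3) * (φ y) ^ ((1 : ℝ) / 3) + 1) * deriv φ y = 0 := by
  intro y hy
  set c := exp (-4 * 1)
  have hc : 0 < c := exp_pos _
  set x := y / c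
  have hx : 0 < x := div_pos hy hc
  have hxc : x * c = y := div_mul_cancel₀ y hc.ne'
  have hφ_near : ∀ᶠ z in 𝓝 x, DifferentiableAt ℝ φ (z * c) := by
    filter_upwards [eventually_gt_nhds hx] with z hz
    exact (hφ _ (mul_pos hz hc)).1
  have hcube_root : (φ y / x ^ 3) ^ ((1 : ℝ) / 3) = φ y ^ ((1 : ℝ) / 3) / x := by
    simpa using div_pow_rpow_div (hφpos y hy).le hx.le 1 three_ne_zero
  have hpow : (φ y / x ^ 3) ^ ((4 : ℝ) / 3) = φ y * φ y ^ ((1 : ℝ) / 3) / x ^ 4 := by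
    rw [show ((4 : ℝ) / 3) = 1 + 1 / 3 by norm_num,
      rpow_add (div_pos (hφpos y hy) (by positivity)), rpow_one, hcube_root]
    ring
  have hpde₁ := hpde 1 x one_pos hx
  rw [((hasDerivAt_comp_mul_exp x (-4) 1 (hxc ▸ (hφ y hy).1)).div_const (x ^ 3)).deriv,
    deriv_deriv_comp_mul_div_pow 3 hx.ne' hφ_near (hxc ▸ (hφ y hy).2),
    (hasDerivAt_comp_mul_div_pow 3 hx.ne' hφ_near.self_of_nhds).deriv, hxc, hcube_root, hpow] at hpde₁
  clear_value x c
  subst hxc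
  field_simp at hpde₁ ⊢
  -- after clearing denominators, `hpde₁` is the goal multiplied by `x ^ 10 * c`
  refine mul_left_cancel₀ (by positivity : x ^ 10 * c ≠ 0) ?_
  linear_combination -hpde₁
end

section
/- Suppose u(t,x) is a positive solution of u_t = x²u_{xx} + 4x(⅓x·u^{1/3} + 1)u_x + 4x·u^{4/3} of the form u(t,x) = t^{-3/2}x^{-3}·φ(y) with y = (ln x − 3t)/√t, for a twice differentiable positive φ and t > 0, x > 0. Then φ satisfies φ''(y) + ((4/3)φ(y)^{1/3} + y/2)φ'(y) + (3/2)φ(y) = 0. -/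
/-!
At `t = 1` and `x = e^{y+3}` the similarity variable `(ln x - 3t)/√t` equals `y` and
`u = φ(y)/x³`. The chain rule expresses `u_t`, `u_x` and `u_xx` there through `φ(y)`, `φ'(y)`
and `φ''(y)`, each carrying a power of `x` that makes every term of the PDE a multiple of `x⁻³`
(using `(φ/x³)^{k/3} = φ^{k/3}/x^k`). Cancelling `x⁻³` leaves the ODE.
-/

open Real

theorem hasDerivAt_comp_log_sub_div_pow {ψ : ℝ → ℝ} {ψ' c z : ℝ} (n : ℕ) (hz : z ≠ 0)
    (hψ : HasDerivAt ψ ψ' (log z - c)) :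
    HasDerivAt (fun z => ψ (log z - c) / z ^ n)
      ((ψ' - n * ψ (log z - c)) / z ^ (n + 1)) z := by
  have hlog : HasDerivAt (fun z => log z - c) z⁻¹ z := (hasDerivAt_log hz).sub_const c
  refine ((hψ.comp z hlog).div (hasDerivAt_pow n z) (pow_ne_zero n hz)).congr_deriv ?_
  rcases n with _ | n
  · simp [div_eq_mul_inv]
  · simp only [Function.comp_apply, Nat.add_sub_cancel]
    field_simp
    push_cast
    ring

theorem deriv_comp_log_sub_div_pow {ψ : ℝ → ℝ} {c z : ℝ} (n : ℕ) (hz : z ≠ 0)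
    (hψ : DifferentiableAt ℝ ψ (log z - c)) :
    deriv (fun z => ψ (log z - c) / z ^ n) z
      = (deriv ψ (log z - c) - n * ψ (log z - c)) / z ^ (n + 1) :=
  (hasDerivAt_comp_log_sub_div_pow n hz hψ.hasDerivAt).deriv

theorem deriv_deriv_comp_log_sub_div_pow {ψ : ℝ → ℝ} (hψ : Differentiable ℝ ψ)
    (hψ' : Differentiable ℝ (deriv ψ)) (c : ℝ) (n : ℕ) {z : ℝ} (hz : z ≠ 0) :
    deriv (deriv fun z => ψ (log z - c) / z ^ n) z
      = (deriv (deriv ψ) (log z - c) - (2 * n + 1) * deriv ψ (log z - c)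
          + n * (n + 1) * ψ (log z - c)) / z ^ (n + 2) := by
  have hfirst : deriv (fun z => ψ (log z - c) / z ^ n)
      =ᶠ[nhds z] fun z => (deriv ψ (log z - c) - n * ψ (log z - c)) / z ^ (n + 1) :=
    (eventually_ne_nhds hz).mono fun w hw => deriv_comp_log_sub_div_pow n hw (hψ _)
  have hsecond := hasDerivAt_comp_log_sub_div_pow (c := c) (n + 1) hz
    ((hψ' _).hasDerivAt.sub ((hψ _).hasDerivAt.const_mul (n : ℝ)))
  rw [hfirst.deriv_eq]
  refine hsecond.deriv.trans ?_
  simp only [Pi.sub_apply]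
  push_cast
  ring

theorem hasDerivAt_sub_mul_div_sqrt_one (L a : ℝ) :
    HasDerivAt (fun s => (L - a * s) / √s) (-a - (L - a) / 2) 1 := by
  have hnum : HasDerivAt (fun s => L - a * s) (-a) 1 := by
    simpa using ((hasDerivAt_id (1 : ℝ)).const_mul a).const_sub L
  refine (hnum.div (hasDerivAt_sqrt one_ne_zero) (by simp)).congr_deriv ?_
  simp only [sqrt_one]
  ring

theorem deriv_comp_sub_mul_div_sqrt_div_rpow_mul_one {ψ : ℝ → ℝ} (L a p : ℝ) {K : ℝ}
    (hK : K ≠ 0) (hψ : DifferentiableAt ℝ ψ (L - a)) :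
    deriv (fun s => ψ ((L - a * s) / √s) / (s ^ p * K)) 1
      = (deriv ψ (L - a) * (-a - (L - a) / 2) - p * ψ (L - a)) / K := by
  have hψ' : HasDerivAt ψ (deriv ψ (L - a)) ((L - a * 1) / √1) := by
    simpa using hψ.hasDerivAt
  have hden : HasDerivAt (fun s : ℝ => s ^ p * K) (p * 1 ^ (p - 1) * K) 1 :=
    (hasDerivAt_rpow_const (Or.inl one_ne_zero)).mul_const K
  refine ((hψ'.comp 1 (hasDerivAt_sub_mul_div_sqrt_one L a)).div hden
    (by simpa using hK)).deriv.trans ?_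
  simp only [Function.comp_apply, one_rpow, mul_one, sqrt_one, div_one]
  field_simp

theorem div_pow_three_rpow_div_three {p x : ℝ} (hp : 0 ≤ p) (hx : 0 ≤ x) (k : ℝ) :
    (p / x ^ 3) ^ (k / 3) = p ^ (k / 3) / x ^ k := by
  rw [div_rpow hp (by positivity), ← rpow_natCast x 3, ← rpow_mul hx]
  congr 2
  push_cast
  ring

/-- if `u(t,x) = t^{−3/2}x⁻³·φ((ln x − 3t)/√t)` is a positive solution of
`u_t = x²u_{xx} + 4x(⅓x·u^{1/3} + 1)u_x + 4x·u^{4/3}` on `ℝ₊ × ℝ₊`, with `φ` twice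
differentiable and positive, then `φ` satisfies
`φ'' + ((4/3)φ^{1/3} + y/2)φ' + (3/2)φ = 0`. -/
theorem stmt_17 (φ : ℝ → ℝ)
    (hφ : ∀ y : ℝ, DifferentiableAt ℝ φ y ∧ DifferentiableAt ℝ (deriv φ) y)
    (hφpos : ∀ y : ℝ, 0 < φ y)
    (hpde : ∀ t x : ℝ, 0 < t → 0 < x →
      deriv (fun s => φ ((Real.log x - 3 * s) / Real.sqrt s)
          / (s ^ ((3 : ℝ) / 2) * x ^ 3)) t =
        x ^ 2 * deriv (deriv (fun y => φ ((Real.log y - 3 * t) / Real.sqrt t)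
            / (t ^ ((3 : ℝ) / 2) * y ^ 3))) x
        + 4 * x * ((1 / 3) * x
              * (φ ((Real.log x - 3 * t) / Real.sqrt t)
                  / (t ^ ((3 : ℝ) / 2) * x ^ 3)) ^ ((1 : ℝ) / 3) + 1)
            * deriv (fun y => φ ((Real.log y - 3 * t) / Real.sqrt t)
                / (t ^ ((3 : ℝ) / 2) * y ^ 3)) x
        + 4 * x * (φ ((Real.log x - 3 * t) / Real.sqrt t)
              / (t ^ ((3 : ℝ) / 2) * x ^ 3)) ^ ((4 : ℝ) / 3)) :
    ∀ y : ℝ,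
      deriv (deriv φ) y
        + ((4 / 3) * (φ y) ^ ((1 : ℝ) / 3) + y / 2) * deriv φ y
        + (3 / 2) * φ y = 0 := by
  intro y
  obtain ⟨x, hx, rfl⟩ : ∃ x, 0 < x ∧ log x - 3 = y := ⟨exp (y + 3), exp_pos _, by simp⟩
  have hφ₁ : Differentiable ℝ φ := fun w => (hφ w).1
  have hφ₂ : Differentiable ℝ (deriv φ) := fun w => (hφ w).2
  have H := hpde 1 x one_pos hx
  rw [deriv_comp_sub_mul_div_sqrt_div_rpow_mul_one _ _ _ (by positivity) (hφ₁ _)] at H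
  simp only [mul_one, sqrt_one, div_one, one_rpow, one_mul] at H
  rw [deriv_comp_log_sub_div_pow 3 hx.ne' (hφ₁ _),
    deriv_deriv_comp_log_sub_div_pow hφ₁ hφ₂ 3 3 hx.ne',
    div_pow_three_rpow_div_three (hφpos _).le hx.le,
    div_pow_three_rpow_div_three (hφpos _).le hx.le, rpow_one, rpow_ofNat,
    show (4 : ℝ) / 3 = 1 / 3 + 1 by norm_num, rpow_add_one (hφpos _).ne'] at H
  norm_num at H
  field_simp at H
  linear_combination -H / 6
end

section
/- For any c₃ > 0, the function φ(y) = 1/(1 − c₃·y^{-1/3})³, defined on the set of y > 0 where 1 − c₃·y^{-1/3} > 0, satisfies the generalized Emden–Fowler equation φ''(y) + (4/(3y))·φ(y)^{1/3}·φ'(y) = 0. -/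
/-! With `w = y^{-1/3}` and `u = 1 - c₃ w`, the power rule reads `w' = -w / (3y)`, so
`u' = c₃ w / (3y)`, `φ = u⁻³`, `φ' = -c₃ w / (y u⁴)` and `φ'' = 4 c₃ w / (3 y² u⁵)`.
Since `u > 0`, the real cube root of `φ` is `u⁻¹`, and `(4 / (3y)) u⁻¹ φ'` cancels `φ''`. -/

open Filter Topology

lemma hasDerivAt_rpow_const_eq_div {p z : ℝ} (hz : z ≠ 0) :
    HasDerivAt (fun x : ℝ => x ^ p) (p * z ^ p / z) z := by
  simpa [Real.rpow_sub_one hz, mul_div_assoc] using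
    Real.hasDerivAt_rpow_const (p := p) (Or.inl hz)

section

variable {c z : ℝ}

lemma hasDerivAt_one_sub_mul_rpow_neg_third (hz : 0 < z) :
    HasDerivAt (fun x : ℝ => 1 - c * x ^ (-(1 : ℝ) / 3))
      (c * z ^ (-(1 : ℝ) / 3) / (3 * z)) z :=
  (((hasDerivAt_rpow_const_eq_div hz.ne').const_mul c).const_sub 1).congr_deriv (by ring)

lemma hasDerivAt_emdenFowler_sol (hz : 0 < z) (hu : 0 < 1 - c * z ^ (-(1 : ℝ) / 3)) :
    HasDerivAt (fun x : ℝ => 1 / (1 - c * x ^ (-(1 : ℝ) / 3)) ^ 3)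
      (-c * z ^ (-(1 : ℝ) / 3) / (z * (1 - c * z ^ (-(1 : ℝ) / 3)) ^ 4)) z := by
  refine ((hasDerivAt_const z (1 : ℝ)).fun_div
    ((hasDerivAt_one_sub_mul_rpow_neg_third hz).fun_pow 3) (pow_ne_zero 3 hu.ne')).congr_deriv ?_
  have := hu.ne'
  norm_num
  field_simp

lemma hasDerivAt_deriv_emdenFowler_sol (hz : 0 < z) (hu : 0 < 1 - c * z ^ (-(1 : ℝ) / 3)) :
    HasDerivAt (fun x : ℝ => -c * x ^ (-(1 : ℝ) / 3) / (x * (1 - c * x ^ (-(1 : ℝ) / 3)) ^ 4))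
      (4 * c * z ^ (-(1 : ℝ) / 3) / (3 * z ^ 2 * (1 - c * z ^ (-(1 : ℝ) / 3)) ^ 5)) z := by
  refine (((hasDerivAt_rpow_const_eq_div hz.ne').const_mul (-c)).fun_div
    ((hasDerivAt_id' z).fun_mul ((hasDerivAt_one_sub_mul_rpow_neg_third hz).fun_pow 4))
    (mul_ne_zero hz.ne' (pow_ne_zero 4 hu.ne'))).congr_deriv ?_
  set w := z ^ (-(1 : ℝ) / 3)
  set u := 1 - c * w with hu_def
  have := hu.ne'
  norm_num
  field_simp
  linear_combination 4 * c * hu_def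

lemma deriv_emdenFowler_sol_eventuallyEq (hz : 0 < z) (hu : 0 < 1 - c * z ^ (-(1 : ℝ) / 3)) :
    deriv (fun x : ℝ => 1 / (1 - c * x ^ (-(1 : ℝ) / 3)) ^ 3)
      =ᶠ[𝓝 z] fun x => -c * x ^ (-(1 : ℝ) / 3) / (x * (1 - c * x ^ (-(1 : ℝ) / 3)) ^ 4) := by
  have hcont : ContinuousAt (fun x : ℝ => 1 - c * x ^ (-(1 : ℝ) / 3)) z :=
    (hasDerivAt_one_sub_mul_rpow_neg_third hz).continuousAt
  filter_upwards [eventually_gt_nhds hz, hcont.eventually (lt_mem_nhds hu)] with x hx hux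
  exact (hasDerivAt_emdenFowler_sol hx hux).deriv

end

theorem stmt_19_general (c₃ : ℝ) :
    ∀ y : ℝ, 0 < y → 0 < 1 - c₃ * y ^ (-(1 : ℝ) / 3) →
      deriv (deriv (fun z : ℝ => 1 / (1 - c₃ * z ^ (-(1 : ℝ) / 3)) ^ 3)) y
        + (4 / (3 * y))
            * (1 / (1 - c₃ * y ^ (-(1 : ℝ) / 3)) ^ 3) ^ ((1 : ℝ) / 3)
            * deriv (fun z : ℝ => 1 / (1 - c₃ * z ^ (-(1 : ℝ) / 3)) ^ 3) y = 0 := by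
  intro y hy hu
  have hd2 : deriv (deriv (fun z : ℝ => 1 / (1 - c₃ * z ^ (-(1 : ℝ) / 3)) ^ 3)) y
      = 4 * c₃ * y ^ (-(1 : ℝ) / 3) / (3 * y ^ 2 * (1 - c₃ * y ^ (-(1 : ℝ) / 3)) ^ 5) := by
    rw [(deriv_emdenFowler_sol_eventuallyEq hy hu).deriv_eq]
    exact (hasDerivAt_deriv_emdenFowler_sol hy hu).deriv
  have hcbrt : (1 / (1 - c₃ * y ^ (-(1 : ℝ) / 3)) ^ 3) ^ ((1 : ℝ) / 3)
      = 1 / (1 - c₃ * y ^ (-(1 : ℝ) / 3)) := by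
    rw [← one_div_pow]
    simpa using Real.pow_rpow_inv_natCast (n := 3) (one_div_pos.mpr hu).le three_ne_zero
  rw [hd2, hcbrt, (hasDerivAt_emdenFowler_sol hy hu).deriv]
  field_simp
  ring

/-- for any `c₃ > 0`, the function `φ(y) = 1/(1 − c₃·y^{−1/3})³`
satisfies the generalized Emden–Fowler equation `φ'' + (4/(3y))·φ^{1/3}·φ' = 0`
at every `y > 0` with `1 − c₃·y^{−1/3} > 0`. -/
theorem stmt_19 (c₃ : ℝ) (hc₃ : 0 < c₃) :
    ∀ y : ℝ, 0 < y → 0 < 1 - c₃ * y ^ (-(1 : ℝ) / 3) →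
      deriv (deriv (fun z : ℝ => 1 / (1 - c₃ * z ^ (-(1 : ℝ) / 3)) ^ 3)) y
        + (4 / (3 * y))
            * (1 / (1 - c₃ * y ^ (-(1 : ℝ) / 3)) ^ 3) ^ ((1 : ℝ) / 3)
            * deriv (fun z : ℝ => 1 / (1 - c₃ * z ^ (-(1 : ℝ) / 3)) ^ 3) y = 0 :=
  stmt_19_general c₃
end
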